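/- arXiv:0904.0077 — 2 statements merged into one kernel-verified Lean document; each statement's English description precedes it below -/
import Mathlib

section
/- If S is an AG-groupoid with left identity, then (f∘g)∘(h∘k) = (k∘h)∘(g∘f) for all fuzzy subsets f, g, h, k of S (the paramedial law in F(S)). -/
open unitInterval

instance : Fact ((0:ℝ) ≤ 1) := ⟨zero_le_one⟩

/-- Convolution product of fuzzy subsets: (f∘g)(x) = sup over x = y*z of min (f y) (g z),
with value 0 (= ⊥) if x has no factorization. -/
noncomputable def conv {S : Type*} [Mul S] (f g : S → I) : S → I :=
  fun x => ⨆ p : {p : S × S // p.1 * p.2 = x}, f p.1.1 ⊓ g p.1.2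

/-! The paramedial law `(ab)(cd) = (dc)(ba)` of an AG-groupoid with left identity (a consequence
of the medial law and of `xy = (yx)e`) is inherited by the convolution product: every
factorization `x = (ab)(cd)` feeding the sup on the left is also the factorization
`x = (dc)(ba)` feeding the sup on the right, with the same value `min (f a, g b, h c, k d)`. -/

section AGGroupoid

variable {S : Type*} [Mul S]

theorem medial_of_leftInvertive (hli : ∀ a b c : S, (a * b) * c = (c * b) * a)
    (a b c d : S) : (a * b) * (c * d) = (a * c) * (b * d) := by
  rw [hli a b (c * d), hli c d b, hli (b * d) c a]

theorem paramedial_of_leftInvertive (hli : ∀ a b c : S, (a * b) * c = (c * b) * a)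
    {e : S} (he : ∀ x : S, e * x = x) (a b c d : S) :
    (a * b) * (c * d) = (d * c) * (b * a) := by
  have mul_eq_mul_mul_e : ∀ x y : S, x * y = (y * x) * e := fun x y => by
    rw [← hli e x y, he]
  rw [mul_eq_mul_mul_e a b, mul_eq_mul_mul_e c d, medial_of_leftInvertive hli, he e,
    hli (b * a) (d * c) e, he]

end AGGroupoid

section Convolution

variable {S : Type*} [Mul S]

theorem inf_le_conv_mul (f g : S → I) (y z : S) : f y ⊓ g z ≤ conv f g (y * z) :=
  le_iSup_of_le ⟨(y, z), rfl⟩ le_rfl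

theorem conv_apply_inf_conv_apply_le {f g h k : S → I} {u v : S} {t : I}
    (hle : ∀ a b c d : S, a * b = u → c * d = v → f a ⊓ g b ⊓ (h c ⊓ k d) ≤ t) :
    conv f g u ⊓ conv h k v ≤ t := by
  rw [conv, iSup_inf_eq]
  refine iSup_le fun ⟨⟨a, b⟩, hab⟩ => ?_
  rw [conv, inf_iSup_eq]
  exact iSup_le fun ⟨⟨c, d⟩, hcd⟩ => hle a b c d hab hcd

theorem conv_conv_le_of_paramedial (pm : ∀ a b c d : S, (a * b) * (c * d) = (d * c) * (b * a))
    (f g h k : S → I) : conv (conv f g) (conv h k) ≤ conv (conv k h) (conv g f) := by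
  intro x
  refine iSup_le fun ⟨⟨u, v⟩, huv⟩ => conv_apply_inf_conv_apply_le ?_
  rintro a b c d rfl rfl
  calc f a ⊓ g b ⊓ (h c ⊓ k d) = k d ⊓ h c ⊓ (g b ⊓ f a) := by ac_rfl
    _ ≤ conv k h (d * c) ⊓ conv g f (b * a) :=
      inf_le_inf (inf_le_conv_mul ..) (inf_le_conv_mul ..)
    _ ≤ conv (conv k h) (conv g f) ((d * c) * (b * a)) := inf_le_conv_mul ..
    _ = conv (conv k h) (conv g f) x := by rw [← pm, ← huv]

end Convolution

theorem stmt3 {S : Type*} [Mul S]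
    (hli : ∀ a b c : S, (a * b) * c = (c * b) * a)
    (e : S) (he : ∀ x : S, e * x = x)
    (f g h k : S → I) :
    conv (conv f g) (conv h k) = conv (conv k h) (conv g f) := by
  have pm := paramedial_of_leftInvertive hli he
  exact le_antisymm (conv_conv_le_of_paramedial pm f g h k)
    (conv_conv_le_of_paramedial pm k h g f)
end

section
/- In an AG-groupoid S with left identity, every fuzzy right ideal is a fuzzy left ideal (hence a fuzzy two-sided ideal). -/
open unitInterval

/-! In an AG-groupoid with left identity `e` we have `y * z = (e * y) * z = (z * y) * e`, so a
fuzzy right ideal, which only grows under right multiplication, gives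
`f z ≤ f (z * y) ≤ f ((z * y) * e) = f (y * z)`. -/

section Conv

variable {S : Type*} [Mul S]

theorem conv_le_iff {f g h : S → I} : conv f g ≤ h ↔ ∀ y z, f y ⊓ g z ≤ h (y * z) := by
  constructor
  · intro hle y z
    exact (le_iSup (fun p : {p : S × S // p.1 * p.2 = y * z} => f p.1.1 ⊓ g p.1.2)
      ⟨(y, z), rfl⟩).trans (hle _)
  · intro hle x
    refine iSup_le ?_
    rintro ⟨⟨y, z⟩, rfl⟩
    exact hle y z

theorem conv_const_one_right_le_iff {f : S → I} :
    conv f (fun _ => 1) ≤ f ↔ ∀ a b, f a ≤ f (a * b) := by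
  rw [conv_le_iff]
  exact forall₂_congr fun a b => by rw [inf_eq_left.mpr unitInterval.le_one']

theorem conv_const_one_left_le_iff {f : S → I} :
    conv (fun _ => 1) f ≤ f ↔ ∀ a b, f b ≤ f (a * b) := by
  rw [conv_le_iff]
  exact forall₂_congr fun a b => by rw [inf_eq_right.mpr unitInterval.le_one']

end Conv

theorem mul_eq_swap_mul_mul_of_left_id {S : Type*} [Mul S]
    (hli : ∀ a b c : S, (a * b) * c = (c * b) * a) {e : S} (he : ∀ x : S, e * x = x)
    (a b : S) : a * b = (b * a) * e := by
  calc a * b = (e * a) * b := by rw [he]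
    _ = (b * a) * e := hli e a b

theorem stmt14 {S : Type*} [Mul S]
    (hli : ∀ a b c : S, (a * b) * c = (c * b) * a)
    (e : S) (he : ∀ x : S, e * x = x)
    (f : S → I) (hright : conv f (fun _ => (1 : I)) ≤ f) :
    conv (fun _ => (1 : I)) f ≤ f := by
  rw [conv_const_one_right_le_iff] at hright
  rw [conv_const_one_left_le_iff]
  intro y z
  calc f z ≤ f (z * y) := hright z y
    _ ≤ f ((z * y) * e) := hright _ e
    _ = f (y * z) := by rw [← mul_eq_swap_mul_mul_of_left_id hli he]
end
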